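/- Let k be a field, d ≥ 0, and R = k[a_1,…,a_d, t]. Let L be the free R-module with basis b′_1,…,b′_{d+1}, b_1,…,b_d, and set b̃_i = b′_i + t·b_i − b_{i−1} ∈ L for 1 ≤ i ≤ d+1 (conventions b_0 = b_{d+1} = 0). Let I = Σ_{i=1}^{d+1} R·b̃_i ⊆ L, and let I^⊥ = {φ ∈ Hom_R(L, R) : φ(x) = 0 for all x ∈ I}. Then I^⊥ is a free R-module with basis the d elements b′^*_{i+1} + b^*_i − t·b′^*_i for 1 ≤ i ≤ d, where (b′^*_j, b^*_j) denotes the dual basis of Hom_R(L, R). -/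

import Mathlib

open MvPolynomial

/-- Variables of `R = k[a_1,…,a_d, t]`. -/
abbrev RVar (d : ℕ) : Type := Fin d ⊕ Unit

/-- Index type for the basis `b'_1,…,b'_{d+1}, b_1,…,b_d` of `L`:
`Sum.inl p` is `b'_{p+1}`, `Sum.inr p` is `b_{p+1}`. -/
abbrev LIdx (d : ℕ) : Type := Fin (d + 1) ⊕ Fin d

/-- The basis vector `b_m` of `L` (`1 ≤ m ≤ d`), with conventions `b_0 = b_{d+1} = 0`. -/
noncomputable def bvec (k : Type) [Field k] (d : ℕ) (m : ℕ) :
    LIdx d → MvPolynomial (RVar d) k :=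
  if h : 1 ≤ m ∧ m ≤ d then Pi.single (Sum.inr (⟨m - 1, by omega⟩ : Fin d))
    (1 : MvPolynomial (RVar d) k)
  else 0

/-- `b̃_i = b'_i + t·b_i - b_{i-1} ∈ L` (with `b_0 = b_{d+1} = 0`), for `i = p + 1`. -/
noncomputable def btildeL (k : Type) [Field k] (d : ℕ) (p : Fin (d + 1)) :
    LIdx d → MvPolynomial (RVar d) k :=
  Pi.single (Sum.inl p) (1 : MvPolynomial (RVar d) k) +
    (X (Sum.inr ()) : MvPolynomial (RVar d) k) • bvec k d ((p : ℕ) + 1) -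
    bvec k d (p : ℕ)

/-- `I = ∑ R·b̃_i ⊆ L`. -/
noncomputable def Isub (k : Type) [Field k] (d : ℕ) :
    Submodule (MvPolynomial (RVar d) k) (LIdx d → MvPolynomial (RVar d) k) :=
  Submodule.span _ (Set.range (btildeL k d))

/-- The dual basis element `b'^*_{p+1}` of `Hom_R(L, R)`. -/
noncomputable def bpdual (k : Type) [Field k] (d : ℕ) (p : Fin (d + 1)) :
    Module.Dual (MvPolynomial (RVar d) k) (LIdx d → MvPolynomial (RVar d) k) :=
  LinearMap.proj (Sum.inl p)

/-- The dual basis element `b^*_{p+1}` of `Hom_R(L, R)`. -/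
noncomputable def bdual (k : Type) [Field k] (d : ℕ) (p : Fin d) :
    Module.Dual (MvPolynomial (RVar d) k) (LIdx d → MvPolynomial (RVar d) k) :=
  LinearMap.proj (Sum.inr p)

/-!
Since `b'_i = b̃_i - t • b_i + b_{i-1}`, the module `L` is `I + ∑ R • b_j`, so a functional
in `I^⊥` is determined by its values on `b_1, …, b_d`. The proposed elements `ψ_j` lie in `I^⊥`
and are dual to `b_1, …, b_d`; hence every `φ ∈ I^⊥` equals `∑ φ(b_j) • ψ_j`, and the `ψ_j`
are independent.
-/

namespace Submodule

variable {R M ι : Type*} [CommRing R] [AddCommGroup M] [Module R M] [Fintype ι] [DecidableEq ι]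
  {I : Submodule R M} {e : ι → M} {ψ : ι → Module.Dual R M}

theorem sum_apply_smul_eq_of_mem_dualAnnihilator
    (hspan : I ⊔ span R (Set.range e) = ⊤) (hψ : ∀ i, ψ i ∈ I.dualAnnihilator)
    (hψe : ∀ i j, ψ i (e j) = if i = j then 1 else 0)
    {φ : Module.Dual R M} (hφ : φ ∈ I.dualAnnihilator) :
    ∑ j, φ (e j) • ψ j = φ := by
  rw [← sub_eq_zero, ← LinearMap.ker_eq_top, eq_top_iff, ← hspan, sup_le_iff, span_le]
  constructor
  · intro x hx
    have hmem : ∑ j, φ (e j) • ψ j - φ ∈ I.dualAnnihilator :=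
      sub_mem (sum_mem fun j _ => smul_mem _ _ (hψ j)) hφ
    exact (mem_dualAnnihilator _).1 hmem x hx
  · rintro _ ⟨j, rfl⟩
    simp [hψe]

theorem exists_basis_dualAnnihilator
    (hspan : I ⊔ span R (Set.range e) = ⊤) (hψ : ∀ i, ψ i ∈ I.dualAnnihilator)
    (hψe : ∀ i j, ψ i (e j) = if i = j then 1 else 0) :
    ∃ B : Module.Basis ι R I.dualAnnihilator, ∀ i, (B i : Module.Dual R M) = ψ i := by
  let v : ι → I.dualAnnihilator := fun i => ⟨ψ i, hψ i⟩
  have hli : LinearIndependent R v := by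
    let evalAt : I.dualAnnihilator →ₗ[R] ι → R :=
      (LinearMap.pi fun j => Module.Dual.eval R M (e j)) ∘ₗ I.dualAnnihilator.subtype
    refine LinearIndependent.of_comp evalAt ?_
    have hcomp : evalAt ∘ v = Pi.basisFun R ι := by
      ext i j
      simp [evalAt, v, hψe, Pi.single_apply, eq_comm]
    exact hcomp ▸ (Pi.basisFun R ι).linearIndependent
  have hsp : ⊤ ≤ span R (Set.range v) := by
    rintro φ -
    rw [mem_span_range_iff_exists_fun]
    exact ⟨fun j => φ.1 (e j), Subtype.ext <| by
      simpa [v] using sum_apply_smul_eq_of_mem_dualAnnihilator hspan hψ hψe φ.2⟩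
  exact ⟨.mk hli hsp, fun i => by rw [Module.Basis.mk_apply]⟩

end Submodule

section

open Submodule

variable (k : Type) [Field k] (d : ℕ)

local notation "R" => MvPolynomial (RVar d) k
local notation "t" => (X (Sum.inr ()) : MvPolynomial (RVar d) k)

noncomputable def perpGen (p : Fin d) : Module.Dual R (LIdx d → R) :=
  bpdual k d p.succ + bdual k d p - t • bpdual k d p.castSucc

lemma perpGen_apply (p : Fin d) (v : LIdx d → R) :
    perpGen k d p v = v (.inl p.succ) + v (.inr p) - t * v (.inl p.castSucc) := by
  simp [perpGen, bpdual, bdual]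

lemma bvec_inl (m : ℕ) (q : Fin (d + 1)) : bvec k d m (.inl q) = 0 := by
  unfold bvec; split_ifs <;> simp

lemma bvec_inr (m : ℕ) (j : Fin d) :
    bvec k d m (.inr j) = if (j : ℕ) + 1 = m then 1 else 0 := by
  unfold bvec
  split_ifs <;> simp_all [Pi.single_apply, Fin.ext_iff] <;> omega

lemma perpGen_single_inr (p j : Fin d) :
    perpGen k d p (Pi.single (.inr j) 1) = if p = j then 1 else 0 := by
  simp [perpGen_apply, Pi.single_apply]

lemma perpGen_btildeL (p : Fin d) (q : Fin (d + 1)) : perpGen k d p (btildeL k d q) = 0 := by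
  simp only [perpGen_apply, btildeL, Pi.add_apply, Pi.sub_apply, Pi.smul_apply, bvec_inl, bvec_inr,
    Pi.single_apply, Sum.inl.injEq, reduceCtorEq, Fin.ext_iff, Fin.val_succ, Fin.val_castSucc]
  split_ifs <;> simp_all

lemma perpGen_mem_dualAnnihilator (p : Fin d) : perpGen k d p ∈ (Isub k d).dualAnnihilator :=
  (mem_dualAnnihilator _).2 fun _ hw => span_le (p := LinearMap.ker _).2
    (by rintro _ ⟨q, rfl⟩; exact perpGen_btildeL k d p q) hw

lemma bvec_mem_span (m : ℕ) :
    bvec k d m ∈ span R (Set.range fun j : Fin d => Pi.single (.inr j) 1) := by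
  unfold bvec
  split_ifs
  · exact subset_span ⟨_, rfl⟩
  · exact zero_mem _

lemma Isub_sup_span_eq_top :
    Isub k d ⊔ span R (Set.range fun j : Fin d => Pi.single (.inr j) 1) = ⊤ := by
  rw [eq_top_iff, ← (Pi.basisFun R (LIdx d)).span_eq, span_le]
  rintro _ ⟨q | j, rfl⟩ <;> rw [Pi.basisFun_apply, SetLike.mem_coe]
  · have hdecomp : Pi.single (.inl q) 1 = btildeL k d q - t • bvec k d (q + 1) + bvec k d q := by
      simp only [btildeL]; abel
    rw [hdecomp]
    exact add_mem (sub_mem (mem_sup_left (subset_span ⟨q, rfl⟩))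
      (smul_mem _ _ (mem_sup_right (bvec_mem_span k d _)))) (mem_sup_right (bvec_mem_span k d _))
  · exact mem_sup_right (subset_span ⟨j, rfl⟩)

end

/-- `I^⊥ ⊆ Hom_R(L, R)` is free with basis the `d` elements
`b'^*_{i+1} + b^*_i - t·b'^*_i`, `1 ≤ i ≤ d` (below `i = p + 1`). -/
theorem statement15 (k : Type) [Field k] (d : ℕ) :
    ∃ B : Module.Basis (Fin d) (MvPolynomial (RVar d) k)
        ↥(Submodule.dualAnnihilator (Isub k d)),
      ∀ p : Fin d,
        (B p : Module.Dual (MvPolynomial (RVar d) k)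
            (LIdx d → MvPolynomial (RVar d) k)) =
          bpdual k d (⟨(p : ℕ) + 1, by have := p.isLt; omega⟩ : Fin (d + 1)) +
            bdual k d p -
            (X (Sum.inr ()) : MvPolynomial (RVar d) k) •
              bpdual k d (⟨(p : ℕ), by have := p.isLt; omega⟩ : Fin (d + 1)) :=
  Submodule.exists_basis_dualAnnihilator (Isub_sup_span_eq_top k d)
    (perpGen_mem_dualAnnihilator k d) (perpGen_single_inr k d)
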